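/- arXiv:2301.09242 — 6 statements merged into one kernel-verified Lean document; each statement's English description precedes it below -/
import Mathlib

section
/- Let n ≥ 1, let p_1, …, p_n be non-negative real numbers, and let ν_1, …, ν_n be real numbers with 0 < ν_n < ν_{n-1} < … < ν_2 < ν_1 < 1/2 satisfying, for every 1 ≤ k ≤ n, the equation Σ_{j=1}^{k-1} p_j · ν_{k-j} + Σ_{j=k}^{n} p_j · (1 − ν_{j-k+1}) = ν_k. Then ν_1/(1 − ν_1) ≤ (1 − ν_i)/(1 − ν_{i+1}) for every 1 ≤ i ≤ n − 1. -/
set_option maxHeartbeats 1000000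


/-- given the system of equations relating `p_j` and `ν_k`,
one has `ν_1/(1-ν_1) ≤ (1-ν_i)/(1-ν_{i+1})` for every `1 ≤ i ≤ n-1`. -/
theorem stmt0 (n : ℕ) (hn : 1 ≤ n) (p ν : ℕ → ℝ)
    (hp : ∀ j, 1 ≤ j → j ≤ n → 0 ≤ p j)
    (hν_pos : 0 < ν n)
    (hν_half : ν 1 < 1 / 2)
    (hν_mono : ∀ j k, 1 ≤ j → j < k → k ≤ n → ν k < ν j)
    (heq : ∀ k, 1 ≤ k → k ≤ n →
      (∑ j ∈ Finset.Ico 1 k, p j * ν (k - j)) +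
        (∑ j ∈ Finset.Icc k n, p j * (1 - ν (j - k + 1))) = ν k) :
    ∀ i, 1 ≤ i → i + 1 ≤ n → ν 1 / (1 - ν 1) ≤ (1 - ν i) / (1 - ν (i + 1)) := by
  intro i hi1 hin
  have hn2 : 2 ≤ n := by omega
  have hνle : ∀ k, 1 ≤ k → k ≤ n → ν k ≤ ν 1 := by
    intro k h1 h2
    rcases eq_or_lt_of_le h1 with h | h
    · exact le_of_eq (by rw [← h])
    · exact le_of_lt (hν_mono 1 k le_rfl h h2)
  have hνpos : ∀ k, 1 ≤ k → k ≤ n → 0 < ν k := by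
    intro k h1 h2
    rcases eq_or_lt_of_le h2 with h | h
    · rw [h]; exact hν_pos
    · exact lt_trans hν_pos (hν_mono k n h1 h le_rfl)
  have hν1pos : 0 < ν 1 := hνpos 1 le_rfl hn
  set S := ∑ j ∈ Finset.Icc 1 n, p j with hSdef
  have hSν : S * (1 - ν 1) ≤ ν 1 := by
    have e1 := heq 1 le_rfl hn
    simp only [Finset.Ico_self, Finset.sum_empty, zero_add] at e1
    have e1' : ∑ j ∈ Finset.Icc 1 n, p j * (1 - ν j) = ν 1 := by
      rw [← e1]
      apply Finset.sum_congr rfl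
      intro j hj
      simp only [Finset.mem_Icc] at hj
      congr 3
      omega
    rw [hSdef, ← e1', Finset.sum_mul]
    apply Finset.sum_le_sum
    intro j hj
    simp only [Finset.mem_Icc] at hj
    have h1 := hνle j hj.1 hj.2
    have h2 := hp j hj.1 hj.2
    nlinarith
  have hSnn : 0 ≤ S := Finset.sum_nonneg fun j hj => by
    simp only [Finset.mem_Icc] at hj; exact hp j hj.1 hj.2
  have hS1 : S < 1 := by nlinarith
  -- key difference relation
  have key : ∀ m, 1 ≤ m → m + 1 ≤ n →
      ν m - ν (m + 1) =
        (∑ j ∈ Finset.Ico 1 m, p j * (ν (m - j) - ν (m - j + 1)))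
          + p m * (1 - 2 * ν 1)
          + ∑ j ∈ Finset.Icc (m + 1) n, p j * (ν (j - m) - ν (j - m + 1)) := by
    intro m hm1 hmn
    have e1 := heq m hm1 (by omega)
    have e2 := heq (m + 1) (by omega) hmn
    rw [← Finset.Ico_add_one_right_eq_Icc, Finset.sum_eq_sum_Ico_succ_bot (by omega : m < n + 1),
      Finset.Ico_add_one_right_eq_Icc] at e1
    rw [Finset.sum_Ico_succ_top (by omega : 1 ≤ m)] at e2
    have hmm : m - m + 1 = 1 := by omega
    have hmm2 : m + 1 - m = 1 := by omega
    rw [hmm] at e1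
    rw [hmm2] at e2
    have r1 : ∑ j ∈ Finset.Ico 1 m, p j * ν (m + 1 - j)
        = ∑ j ∈ Finset.Ico 1 m, p j * ν (m - j + 1) := by
      apply Finset.sum_congr rfl
      intro j hj
      simp only [Finset.mem_Ico] at hj
      congr 2
      omega
    have r2 : ∑ j ∈ Finset.Icc (m + 1) n, p j * (1 - ν (j - (m + 1) + 1))
        = ∑ j ∈ Finset.Icc (m + 1) n, p j * (1 - ν (j - m)) := by
      apply Finset.sum_congr rfl
      intro j hj
      simp only [Finset.mem_Icc] at hj
      congr 3
      omega
    rw [r1, r2] at e2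
    have d1 : ∑ j ∈ Finset.Ico 1 m, p j * (ν (m - j) - ν (m - j + 1))
        = (∑ j ∈ Finset.Ico 1 m, p j * ν (m - j))
          - ∑ j ∈ Finset.Ico 1 m, p j * ν (m - j + 1) := by
      rw [← Finset.sum_sub_distrib]
      exact Finset.sum_congr rfl fun j _ => by ring
    have d2 : ∑ j ∈ Finset.Icc (m + 1) n, p j * (ν (j - m) - ν (j - m + 1))
        = (∑ j ∈ Finset.Icc (m + 1) n, p j * (1 - ν (j - m + 1)))
          - ∑ j ∈ Finset.Icc (m + 1) n, p j * (1 - ν (j - m)) := by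
      rw [← Finset.sum_sub_distrib]
      exact Finset.sum_congr rfl fun j _ => by ring
    rw [d1, d2]
    linear_combination e2 - e1
  -- pick a maximizer of the difference
  have hT : (Finset.Icc 1 (n - 1)).Nonempty := by
    rw [Finset.nonempty_Icc]; omega
  obtain ⟨a, haT, hamax⟩ :=
    Finset.exists_max_image (Finset.Icc 1 (n - 1)) (fun m => ν m - ν (m + 1)) hT
  simp only [Finset.mem_Icc] at haT
  set D := ν a - ν (a + 1) with hDdef
  have hkey := key a haT.1 (by omega)
  set A := ∑ j ∈ Finset.Ico 1 a, p j with hAdef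
  set B := ∑ j ∈ Finset.Icc (a + 1) n, p j with hBdef
  have hbound1 : ∑ j ∈ Finset.Ico 1 a, p j * (ν (a - j) - ν (a - j + 1)) ≤ A * D := by
    rw [hAdef, Finset.sum_mul]
    apply Finset.sum_le_sum
    intro j hj
    simp only [Finset.mem_Ico] at hj
    have hpj : 0 ≤ p j := hp j hj.1 (by omega)
    have hd : ν (a - j) - ν (a - j + 1) ≤ D := by
      have := hamax (a - j) (by simp only [Finset.mem_Icc]; omega)
      simpa using this
    exact mul_le_mul_of_nonneg_left hd hpj
  have hbound2 : ∑ j ∈ Finset.Icc (a + 1) n, p j * (ν (j - a) - ν (j - a + 1)) ≤ B * D := by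
    rw [hBdef, Finset.sum_mul]
    apply Finset.sum_le_sum
    intro j hj
    simp only [Finset.mem_Icc] at hj
    have hpj : 0 ≤ p j := hp j (by omega) hj.2
    have hd : ν (j - a) - ν (j - a + 1) ≤ D := by
      have := hamax (j - a) (by simp only [Finset.mem_Icc]; omega)
      simpa using this
    exact mul_le_mul_of_nonneg_left hd hpj
  have hABp : A + (p a + B) = S := by
    rw [hAdef, hBdef, hSdef]
    simp only [← Finset.Ico_add_one_right_eq_Icc]
    rw [← Finset.sum_eq_sum_Ico_succ_bot (by omega : a < n + 1),
      Finset.sum_Ico_consecutive _ (by omega : 1 ≤ a) (by omega : a ≤ n + 1)]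
  have hpa : 0 ≤ p a := hp a haT.1 (by omega)
  have hAnn : 0 ≤ A := Finset.sum_nonneg fun j hj => by
    simp only [Finset.mem_Ico] at hj; exact hp j hj.1 (by omega)
  have hBnn : 0 ≤ B := Finset.sum_nonneg fun j hj => by
    simp only [Finset.mem_Icc] at hj; exact hp j (by omega) hj.2
  have h12 : 0 ≤ 1 - 2 * ν 1 := by linarith
  have hDle : D ≤ A * D + B * D + p a * (1 - 2 * ν 1) := by
    linarith [hkey, hbound1, hbound2, hDdef]
  have hpaS : p a ≤ S := by linarith
  have hDS : D ≤ S * (1 - 2 * ν 1) := by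
    have h1S : (0:ℝ) < 1 - S + p a := by linarith
    nlinarith [mul_nonneg (mul_nonneg h12 (by linarith : (0:ℝ) ≤ S - p a))
      (by linarith : (0:ℝ) ≤ 1 - S)]
  have hΔ : ν i - ν (i + 1) ≤ S * (1 - 2 * ν 1) := by
    have := hamax i (by simp only [Finset.mem_Icc]; omega)
    linarith
  have hνi : ν i ≤ ν 1 := hνle i hi1 (by omega)
  have h1i : 0 < 1 - ν (i + 1) := by
    have := hνle (i + 1) (by omega) hin
    linarith
  rw [div_le_div_iff₀ (by linarith) h1i]
  have h1 := mul_le_mul_of_nonneg_left hΔ hν1pos.le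
  have h2 : ν 1 * (S * (1 - 2 * ν 1)) ≤ ν 1 * (1 - 2 * ν 1) := by
    have := mul_le_mul_of_nonneg_right hS1.le h12
    have := mul_le_mul_of_nonneg_left this hν1pos.le
    nlinarith [this]
  have h3 : ν 1 * (1 - 2 * ν 1) ≤ (1 - ν i) * (1 - 2 * ν 1) := by
    have hh : ν 1 ≤ 1 - ν i := by linarith
    exact mul_le_mul_of_nonneg_right hh h12
  nlinarith [h1, h2, h3]
end

section
/- Let n ≥ 1, let p_1, …, p_n be non-negative real numbers with p_n > 0, and let ν_1, …, ν_n be real numbers with 0 < ν_n < ν_{n-1} < … < ν_2 < ν_1 < 1/2 satisfying, for every 1 ≤ k ≤ n, the equation Σ_{j=1}^{k-1} p_j · ν_{k-j} + Σ_{j=k}^{n} p_j · (1 − ν_{j-k+1}) = ν_k. Then the polynomial x^n − p_1 x^{n-1} − … − p_{n-1} x − p_n has exactly one positive real root λ_1, and ν_1/(1 − ν_1) ≤ λ_1. -/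
lemma sum_Icc_split_bot {M : Type*} [AddCommMonoid M] (f : ℕ → M) (a b : ℕ) (h : a ≤ b) :
    ∑ j ∈ Finset.Icc a b, f j = f a + ∑ j ∈ Finset.Icc (a+1) b, f j := by
  rw [Finset.Icc_add_one_left_eq_Ioc, ← Finset.Icc_erase_left]
  exact (Finset.add_sum_erase _ _ (Finset.mem_Icc.mpr ⟨le_refl a, h⟩)).symm

set_option maxHeartbeats 1000000 in
/-- with `p_n > 0`, the polynomial `x^n - p_1 x^{n-1} - … - p_n` has exactly
one positive real root `λ₁`, and `ν_1/(1-ν_1) ≤ λ₁`. -/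
theorem stmt1 (n : ℕ) (hn : 1 ≤ n) (p ν : ℕ → ℝ)
    (hp : ∀ j, 1 ≤ j → j ≤ n → 0 ≤ p j)
    (hpn : 0 < p n)
    (hν_pos : 0 < ν n)
    (hν_half : ν 1 < 1 / 2)
    (hν_mono : ∀ j k, 1 ≤ j → j < k → k ≤ n → ν k < ν j)
    (heq : ∀ k, 1 ≤ k → k ≤ n →
      (∑ j ∈ Finset.Ico 1 k, p j * ν (k - j)) +
        (∑ j ∈ Finset.Icc k n, p j * (1 - ν (j - k + 1))) = ν k) :
    ∃ lam : ℝ, 0 < lam ∧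
      lam ^ n - ∑ j ∈ Finset.Icc 1 n, p j * lam ^ (n - j) = 0 ∧
      (∀ x : ℝ, 0 < x → x ^ n - ∑ j ∈ Finset.Icc 1 n, p j * x ^ (n - j) = 0 → x = lam) ∧
      ν 1 / (1 - ν 1) ≤ lam := by
  set r : ℝ := ν 1 / (1 - ν 1) with hr_def
  have hν1pos : 0 < ν 1 := by
    rcases eq_or_lt_of_le hn with h | h
    · exact h ▸ hν_pos
    · exact hν_pos.trans (hν_mono 1 n le_rfl h le_rfl)
  have h1ν : (0:ℝ) < 1 - ν 1 := by linarith
  have hr_pos : 0 < r := div_pos hν1pos h1ν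
  have hr_lt1 : r < 1 := by rw [hr_def, div_lt_one h1ν]; linarith
  have hν1r : r * (1 - ν 1) = ν 1 := div_mul_cancel₀ _ h1ν.ne'
  have hν_le : ∀ m, 1 ≤ m → m ≤ n → ν m ≤ ν 1 := by
    intro m h1 h2
    rcases eq_or_lt_of_le h1 with h | h
    · exact le_of_eq (by rw [← h])
    · exact (hν_mono 1 m le_rfl h h2).le
  have heq1 : ∑ j ∈ Finset.Icc 1 n, p j * (1 - ν j) = ν 1 := by
    have h := heq 1 le_rfl hn
    rw [Finset.Ico_self, Finset.sum_empty, zero_add] at h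
    rw [← h]
    refine Finset.sum_congr rfl fun j hj => ?_
    rw [Finset.mem_Icc] at hj
    rw [show j - 1 + 1 = j by omega]
  have hsum_le : ∑ j ∈ Finset.Icc 1 n, p j ≤ r := by
    have h2 := Finset.sum_le_sum (s := Finset.Icc 1 n)
      (f := fun j => p j * (1 - ν 1)) (g := fun j => p j * (1 - ν j))
      (fun j hj => by
        rw [Finset.mem_Icc] at hj
        exact mul_le_mul_of_nonneg_left (by linarith [hν_le j hj.1 hj.2]) (hp j hj.1 hj.2))
    rw [heq1, ← Finset.sum_mul] at h2
    rw [hr_def, le_div_iff₀ h1ν]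
    linarith
  -- Claim A : ν (k+1) ≥ r * ν k
  have claimA : ∀ k, 1 ≤ k → k + 1 ≤ n → r * ν k ≤ ν (k + 1) := by
    by_contra hcon
    push_neg at hcon
    obtain ⟨kb, hkb1, hkbn, hkbD⟩ := hcon
    obtain ⟨k0, hk0mem, hk0min⟩ := Finset.exists_min_image (Finset.Icc 1 (n-1))
      (fun k => ν (k+1) - r * ν k) ⟨kb, Finset.mem_Icc.mpr ⟨hkb1, by omega⟩⟩
    rw [Finset.mem_Icc] at hk0mem
    obtain ⟨hk01, hk0n'⟩ := hk0mem
    have hk0n : k0 + 1 ≤ n := by omega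
    set ε : ℝ := ν (k0+1) - r * ν k0 with hε_def
    have hmin : ∀ m, 1 ≤ m → m + 1 ≤ n → ε ≤ ν (m+1) - r * ν m := fun m h1 h2 =>
      hk0min m (Finset.mem_Icc.mpr ⟨h1, by omega⟩)
    have hεneg : ε < 0 := lt_of_le_of_lt (hmin kb hkb1 hkbn) (by linarith)
    have h4 : (1 - r*r) * ν 1 = (1 - r) * r := by linear_combination (r - 1) * hν1r
    have e1 := heq (k0+1) (by omega) (by omega)
    have e0 := heq k0 (by omega) (by omega)
    rw [Finset.sum_Ico_succ_top hk01] at e1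
    rw [show k0 + 1 - k0 = 1 by omega] at e1
    have hB1e : ∑ j ∈ Finset.Icc (k0+1) n, p j * (1 - ν (j - (k0+1) + 1))
        = ∑ j ∈ Finset.Icc (k0+1) n, p j * (1 - ν (j - k0)) := by
      refine Finset.sum_congr rfl fun j hj => ?_
      rw [Finset.mem_Icc] at hj
      rw [show j - (k0+1) + 1 = j - k0 by omega]
    rw [hB1e] at e1
    rw [sum_Icc_split_bot (fun j => p j * (1 - ν (j - k0 + 1))) k0 n (by omega)] at e0
    rw [show k0 - k0 + 1 = 1 by omega] at e0
    have hA : r * (∑ j ∈ Finset.Ico 1 k0, p j * ν (k0 - j)) + (∑ j ∈ Finset.Ico 1 k0, p j) * ε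
        ≤ ∑ j ∈ Finset.Ico 1 k0, p j * ν (k0 + 1 - j) := by
      rw [Finset.mul_sum, Finset.sum_mul, ← Finset.sum_add_distrib]
      refine Finset.sum_le_sum fun j hj => ?_
      rw [Finset.mem_Ico] at hj
      have hm := hmin (k0 - j) (by omega) (by omega)
      have hpj := hp j hj.1 (by omega)
      rw [show k0 + 1 - j = k0 - j + 1 by omega]
      nlinarith [mul_le_mul_of_nonneg_left hm hpj]
    have hB : r * (∑ j ∈ Finset.Icc (k0+1) n, p j * (1 - ν (j - k0 + 1)))
          + (∑ j ∈ Finset.Icc (k0+1) n, p j) * ε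
        ≤ ∑ j ∈ Finset.Icc (k0+1) n, p j * (1 - ν (j - k0)) := by
      rw [Finset.mul_sum, Finset.sum_mul, ← Finset.sum_add_distrib]
      refine Finset.sum_le_sum fun j hj => ?_
      rw [Finset.mem_Icc] at hj
      have hm := hmin (j - k0) (by omega) (by omega)
      have hpj := hp j (by omega) hj.2
      have hle := hν_le (j - k0) (by omega) (by omega)
      have hkey : r * (1 - ν (j - k0 + 1)) + ε ≤ 1 - ν (j - k0) := by
        nlinarith [mul_le_mul_of_nonneg_left hm hr_pos.le,
          mul_le_mul_of_nonneg_left hle (by nlinarith : (0:ℝ) ≤ 1 - r*r),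
          mul_nonneg (by linarith : (0:ℝ) ≤ 1 - r) (by linarith : (0:ℝ) ≤ 1 - r - ε), h4]
      nlinarith [mul_le_mul_of_nonneg_left hkey hpj]
    have hQ12 : (∑ j ∈ Finset.Ico 1 k0, p j) + (∑ j ∈ Finset.Icc (k0+1) n, p j) ≤ r := by
      have ha : ∑ j ∈ Finset.Ico 1 k0, p j ≤ ∑ j ∈ Finset.Icc 1 k0, p j :=
        Finset.sum_le_sum_of_subset_of_nonneg Finset.Ico_subset_Icc_self
          (fun i hi _ => hp i (Finset.mem_Icc.mp hi).1
            (le_trans (Finset.mem_Icc.mp hi).2 (by omega)))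
      have hb := Finset.sum_Ico_consecutive (fun j => p j)
        (show 1 ≤ k0 + 1 by omega) (show k0 + 1 ≤ n + 1 by omega)
      simp only [Finset.Ico_add_one_right_eq_Icc] at hb
      linarith [hsum_le]
    have hpk0 : p k0 * ν 1 - r * (p k0 * (1 - ν 1)) = 0 := by
      linear_combination (-(p k0)) * hν1r
    have e0r : r * ((∑ j ∈ Finset.Ico 1 k0, p j * ν (k0 - j)) +
        (p k0 * (1 - ν 1) + ∑ j ∈ Finset.Icc (k0+1) n, p j * (1 - ν (j - k0 + 1)))) = r * ν k0 := by
      rw [e0]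
    have hbig : ((∑ j ∈ Finset.Ico 1 k0, p j) + (∑ j ∈ Finset.Icc (k0+1) n, p j)) * ε ≤ ε := by
      have hεd : ε = ν (k0+1) - r * ν k0 := hε_def
      linarith [hA, hB, e1, e0r, hpk0]
    have h5 : r * ε ≤ ((∑ j ∈ Finset.Ico 1 k0, p j) + (∑ j ∈ Finset.Icc (k0+1) n, p j)) * ε :=
      mul_le_mul_of_nonpos_right hQ12 hεneg.le
    have h6 : 0 < (1 - r) * (-ε) := mul_pos (by linarith) (by linarith)
    linarith [hbig, h5, h6]
  -- Claim B : ν j ≥ ν 1 * r^(j-1)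
  have claimB : ∀ j, 1 ≤ j → j ≤ n → ν 1 * r ^ (j - 1) ≤ ν j := by
    intro j
    induction j with
    | zero => omega
    | succ m ih =>
      intro _ h2
      rcases Nat.eq_zero_or_pos m with hm | hm
      · subst hm; simp
      · have hBm := ih hm (by omega)
        have hAm := claimA m hm (by omega)
        have hpow : r ^ m = r ^ (m - 1) * r := by
          rw [← pow_succ]
          congr 1
          omega
        calc ν 1 * r ^ (m + 1 - 1) = r * (ν 1 * r ^ (m - 1)) := by
              rw [show m + 1 - 1 = m from rfl, hpow]; ring
          _ ≤ r * ν m := mul_le_mul_of_nonneg_left hBm hr_pos.le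
          _ ≤ ν (m+1) := hAm
  -- Claim B' : (1 - ν j) * r^(j-1) ≤ 1 - ν 1
  have claimB' : ∀ j, 1 ≤ j → j ≤ n → (1 - ν j) * r ^ (j - 1) ≤ 1 - ν 1 := by
    intro j h1 h2
    have hB := claimB j h1 h2
    have hs0 : 0 < r ^ (j - 1) := pow_pos hr_pos _
    have hs1 : r ^ (j - 1) ≤ 1 := pow_le_one₀ hr_pos.le hr_lt1.le
    have h1s : (0:ℝ) ≤ 1 - r ^ (j-1) := by linarith
    have hins : ν 1 * r ^ (j-1) ≤ ν 1 := by
      nlinarith [mul_le_mul_of_nonneg_left hs1 hν1pos.le]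
    have h2s : (0:ℝ) ≤ 1 - ν 1 * (1 + r ^ (j-1)) := by nlinarith
    nlinarith [mul_le_mul_of_nonneg_right hB hs0.le, mul_nonneg h1s h2s]
  -- Claim C : r^n ≤ ∑ p_j r^(n-j)
  have claimC : r ^ n ≤ ∑ j ∈ Finset.Icc 1 n, p j * r ^ (n - j) := by
    have hterm : ∀ j ∈ Finset.Icc 1 n,
        (r ^ (n-1) / (1 - ν 1)) * (p j * (1 - ν j)) ≤ p j * r ^ (n - j) := by
      intro j hj
      rw [Finset.mem_Icc] at hj
      have hB' := claimB' j hj.1 hj.2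
      have hpj := hp j hj.1 hj.2
      have hrnj : (0:ℝ) < r ^ (n - j) := pow_pos hr_pos _
      have hsplit : r ^ (n-1) = r ^ (n-j) * r ^ (j-1) := by
        rw [← pow_add]; congr 1; omega
      rw [hsplit, div_mul_eq_mul_div, div_le_iff₀ h1ν]
      nlinarith [mul_le_mul_of_nonneg_left hB' (mul_nonneg hpj hrnj.le)]
    have hsum := Finset.sum_le_sum hterm
    rw [← Finset.mul_sum, heq1] at hsum
    have hval : r ^ (n-1) / (1 - ν 1) * ν 1 = r ^ n := by
      have hrn : r ^ n = r ^ (n-1) * r := by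
        rw [← pow_succ]; congr 1; omega
      rw [hrn, hr_def]; ring
    linarith
  -- comparison lemma
  have hcomp : ∀ x y : ℝ, 0 < x → x < y →
      (∑ j ∈ Finset.Icc 1 n, p j * y ^ (n - j)) * x ^ n
        < (∑ j ∈ Finset.Icc 1 n, p j * x ^ (n - j)) * y ^ n := by
    intro x y hx hxy
    rw [Finset.sum_mul, Finset.sum_mul]
    refine Finset.sum_lt_sum (fun j hj => ?_) ⟨n, Finset.mem_Icc.mpr ⟨hn, le_rfl⟩, ?_⟩
    · rw [Finset.mem_Icc] at hj
      have hjn := hj.2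
      have hxn : x ^ n = x ^ (n - j) * x ^ j := by rw [← pow_add, Nat.sub_add_cancel hjn]
      have hyn : y ^ n = y ^ (n - j) * y ^ j := by rw [← pow_add, Nat.sub_add_cancel hjn]
      have hpj := hp j hj.1 hjn
      have hxyj : x ^ j ≤ y ^ j := pow_le_pow_left₀ hx.le hxy.le j
      have hy : (0:ℝ) < y := hx.trans hxy
      have h0 : 0 ≤ p j * (x ^ (n-j) * y ^ (n-j)) := by positivity
      calc p j * y ^ (n-j) * x ^ n = p j * (x ^ (n-j) * y ^ (n-j)) * x ^ j := by
            rw [hxn]; ring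
        _ ≤ p j * (x ^ (n-j) * y ^ (n-j)) * y ^ j := mul_le_mul_of_nonneg_left hxyj h0
        _ = p j * x ^ (n-j) * y ^ n := by rw [hyn]; ring
    · simp only [Nat.sub_self, pow_zero, mul_one]
      exact mul_lt_mul_of_pos_left (pow_lt_pow_left₀ hxy hx.le (by omega)) hpn
  -- existence via IVT
  set c : ℝ := p n / (p n + 1) with hc_def
  have hc0 : 0 < c := div_pos hpn (by linarith)
  have hc1 : c < 1 := by rw [hc_def, div_lt_one (by linarith)]; linarith
  have hcpn : c < p n := by
    rw [hc_def, div_lt_iff₀ (by linarith)]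
    nlinarith [mul_pos hpn hpn]
  have hgc : c ^ n - ∑ j ∈ Finset.Icc 1 n, p j * c ^ (n-j) < 0 := by
    have h1 : p n * c ^ (n - n) ≤ ∑ j ∈ Finset.Icc 1 n, p j * c ^ (n - j) :=
      Finset.single_le_sum (f := fun j => p j * c ^ (n - j))
        (fun j hj => by
          rw [Finset.mem_Icc] at hj
          exact mul_nonneg (hp j hj.1 hj.2) (pow_nonneg hc0.le _))
        (Finset.mem_Icc.mpr ⟨hn, le_rfl⟩)
    have h2 : c ^ n ≤ c := by
      calc c ^ n ≤ c ^ 1 := pow_le_pow_of_le_one hc0.le hc1.le hn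
        _ = c := pow_one c
    simp only [Nat.sub_self, pow_zero, mul_one] at h1
    linarith
  have hg1 : (0:ℝ) < 1 ^ n - ∑ j ∈ Finset.Icc 1 n, p j * 1 ^ (n-j) := by
    simp only [one_pow, mul_one]
    linarith [hsum_le]
  have hcont : ContinuousOn (fun x : ℝ => x ^ n - ∑ j ∈ Finset.Icc 1 n, p j * x ^ (n-j))
      (Set.Icc c 1) := by
    apply Continuous.continuousOn
    exact (continuous_pow n).sub
      (continuous_finset_sum _ fun j _ => continuous_const.mul (continuous_pow _))
  obtain ⟨lam, hlammem, hglam⟩ := intermediate_value_Icc hc1.le hcont ⟨hgc.le, hg1.le⟩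
  have hlam0 : 0 < lam := lt_of_lt_of_le hc0 hlammem.1
  simp only at hglam
  have hSlam : (∑ j ∈ Finset.Icc 1 n, p j * lam ^ (n - j)) = lam ^ n := by linarith
  refine ⟨lam, hlam0, hglam, ?_, ?_⟩
  · intro x hx hxeq
    have hSx : (∑ j ∈ Finset.Icc 1 n, p j * x ^ (n - j)) = x ^ n := by linarith
    rcases lt_trichotomy x lam with h | h | h
    · exfalso
      have hc := hcomp x lam hx h
      rw [hSx, hSlam] at hc
      nlinarith [hc]
    · exact h
    · exfalso
      have hc := hcomp lam x hlam0 h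
      rw [hSx, hSlam] at hc
      nlinarith [hc]
  · by_contra hlt
    push_neg at hlt
    have hc := hcomp lam r hlam0 hlt
    rw [hSlam] at hc
    have h2 : r ^ n * lam ^ n ≤ (∑ j ∈ Finset.Icc 1 n, p j * r ^ (n - j)) * lam ^ n :=
      mul_le_mul_of_nonneg_right claimC (pow_nonneg hlam0.le n)
    nlinarith [hc, h2]
end

section
/- Let w be one of the generators a_1, …, a_m or an inverse of a generator, and let g, x ∈ F_m be such that x ∉ C_fin(g) and g⁻¹·x ∈ C_fin(w). Then g⁻¹ ∈ C_fin(w). -/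
/-- Word length in the free group on `Fin m` w.r.t. the generators and their inverses. -/
def wl {m : ℕ} (g : FreeGroup (Fin m)) : ℕ := g.toWord.length

/-- The shadow `C_fin(g) = {g·x : |g·x| = |g| + |x|}`. -/
def Cfin {m : ℕ} (g : FreeGroup (Fin m)) : Set (FreeGroup (Fin m)) :=
  {h | ∃ x, h = g * x ∧ wl (g * x) = wl g + wl x}

namespace Stmt4Aux

open FreeGroup

variable {α : Type*} [DecidableEq α]

lemma reduce_cons_nil {a : α × Bool} {L : List (α × Bool)} (h : reduce L = []) :
    reduce (a :: L) = [a] := by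
  rw [reduce.cons, h]

lemma reduce_cons_cons {a b : α × Bool} {t L : List (α × Bool)} (h : reduce L = b :: t) :
    reduce (a :: L) = if a.1 = b.1 ∧ a.2 = !b.2 then t else a :: b :: t := by
  rw [reduce.cons, h]

lemma toWord_mul' (x y : FreeGroup α) :
    (x * y).toWord = reduce (x.toWord ++ y.toWord) := by
  rw [← toWord_mk, ← mul_mk, mk_toWord, mk_toWord]

/-- If `a :: L` is reduced then `L` is reduced and `a` does not cancel with the head of `L`. -/
lemma reduced_cons {a : α × Bool} {L : List (α × Bool)}
    (h : reduce (a :: L) = a :: L) :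
    reduce L = L ∧ ∀ b ∈ L.head?, ¬(a.1 = b.1 ∧ a.2 = !b.2) := by
  rcases hr : reduce L with _ | ⟨hd, tl⟩
  · rw [reduce_cons_nil hr] at h
    have hL : [] = L := by injection h
    rw [← hL] at hr ⊢
    simp [hr]
  · by_cases hc : a.1 = hd.1 ∧ a.2 = !hd.2
    · exfalso
      rw [reduce_cons_cons hr, if_pos hc] at h
      have h2 : (reduce L).length ≤ L.length := FreeGroup.reduce.red.length_le
      rw [hr, h] at h2
      simp at h2
    · rw [reduce_cons_cons hr, if_neg hc] at h
      have hL : L = hd :: tl := by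
        injection h with _ h2
        exact h2.symm
      refine ⟨hL.symm, ?_⟩
      intro b hb
      rw [hL] at hb
      simp only [List.head?_cons, Option.mem_def, Option.some.injEq] at hb
      subst hb
      exact hc

/-- If `u` and `v` are reduced and there is no cancellation at the junction,
then `u ++ v` is reduced. -/
lemma reduced_append : ∀ (u v : List (α × Bool)), reduce u = u → reduce v = v →
    (∀ a ∈ u.getLast?, ∀ b ∈ v.head?, ¬(a.1 = b.1 ∧ a.2 = !b.2)) →
    reduce (u ++ v) = u ++ v := by
  intro u
  induction u with
  | nil => intro v _ hv _; simpa using hv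
  | cons a u' ih =>
    intro v hu hv hcompat
    obtain ⟨hu', hhead⟩ := reduced_cons hu
    rcases hu'' : u' with _ | ⟨a', rest⟩
    · -- u = [a]
      subst hu''
      simp only [List.cons_append, List.nil_append]
      rcases hv' : v with _ | ⟨b, t⟩
      · simp [reduce]
      · subst hv'
        rw [reduce_cons_cons hv]
        have hno : ¬(a.1 = b.1 ∧ a.2 = !b.2) := by
          apply hcompat a (by simp) b (by simp)
        rw [if_neg hno]
    · -- u = a :: a' :: rest
      subst hu''
      have hred : reduce ((a' :: rest) ++ v) = (a' :: rest) ++ v := by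
        apply ih v hu' hv
        intro p hp q hq
        apply hcompat p _ q hq
        rw [List.getLast?_cons_cons]
        exact hp
      simp only [List.cons_append] at hred ⊢
      rw [reduce_cons_cons hred]
      have hno : ¬(a.1 = a'.1 ∧ a.2 = !a'.2) := by
        apply hhead a' (by simp)
      rw [if_neg hno]

end Stmt4Aux

open FreeGroup Stmt4Aux

/-- Membership in the shadow of a single letter is having that letter as head. -/
lemma mem_Cfin_single {m : ℕ} (ℓ : Fin m × Bool) (h : FreeGroup (Fin m)) :
    h ∈ Cfin (FreeGroup.mk [ℓ]) ↔ h.toWord.head? = some ℓ := by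
  have hwlen : wl (FreeGroup.mk [ℓ]) = 1 := by
    simp only [wl, toWord_mk, reduce_singleton, List.length_singleton]
  constructor
  · rintro ⟨y, rfl, hlen⟩
    rw [hwlen] at hlen
    have hmul : (FreeGroup.mk [ℓ] * y).toWord = reduce (ℓ :: y.toWord) := by
      rw [toWord_mul', toWord_mk, reduce_singleton, List.singleton_append]
    rcases hy : y.toWord with _ | ⟨b, t⟩
    · rw [hmul, hy, reduce_singleton]
      simp
    · have hredy : reduce (b :: t) = b :: t := by rw [← hy]; exact reduce_toWord y
      by_cases hc : ℓ.1 = b.1 ∧ ℓ.2 = !b.2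
      · exfalso
        have h1 : wl (FreeGroup.mk [ℓ] * y) = t.length := by
          rw [wl, hmul, hy, reduce_cons_cons hredy, if_pos hc]
        have h2 : wl y = t.length + 1 := by
          rw [wl, hy, List.length_cons]
        omega
      · rw [hmul, hy, reduce_cons_cons hredy, if_neg hc]
        simp
  · intro hhead
    rcases hh : h.toWord with _ | ⟨b, rest⟩
    · rw [hh] at hhead; simp at hhead
    · rw [hh] at hhead
      simp only [List.head?_cons, Option.some.injEq] at hhead
      rw [hhead] at hh
      clear hhead
      refine ⟨(FreeGroup.mk [ℓ])⁻¹ * h, by group, ?_⟩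
      have hself : FreeGroup.mk [ℓ] * ((FreeGroup.mk [ℓ])⁻¹ * h) = h := by group
      rw [hself, hwlen]
      have hred : reduce (ℓ :: rest) = ℓ :: rest := by rw [← hh]; exact reduce_toWord h
      have htail : ((FreeGroup.mk [ℓ])⁻¹ * h).toWord = rest := by
        rw [show (FreeGroup.mk [ℓ])⁻¹ = FreeGroup.mk [(ℓ.1, !ℓ.2)] by
          rw [inv_mk]; congr 1]
        rw [toWord_mul', toWord_mk, reduce_singleton, hh, List.singleton_append]
        rw [reduce_cons_cons hred, if_pos ⟨rfl, rfl⟩]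
      rw [wl, wl, hh, htail, List.length_cons]
      omega

/-- if `x ∉ C_fin(g)` and `g⁻¹·x ∈ C_fin(w)` for a generator or inverse
generator `w`, then `g⁻¹ ∈ C_fin(w)`. -/
theorem stmt4 {m : ℕ} (w : FreeGroup (Fin m))
    (hw : (∃ i, w = FreeGroup.of i) ∨ (∃ i, w = (FreeGroup.of i)⁻¹))
    (g x : FreeGroup (Fin m)) (hx : x ∉ Cfin g) (hgx : g⁻¹ * x ∈ Cfin w) :
    g⁻¹ ∈ Cfin w := by
  -- w is a single letter
  obtain ⟨ℓ, rfl⟩ : ∃ ℓ : Fin m × Bool, w = FreeGroup.mk [ℓ] := by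
    rcases hw with ⟨i, rfl⟩ | ⟨i, rfl⟩
    · exact ⟨(i, true), rfl⟩
    · refine ⟨(i, false), ?_⟩
      rw [show FreeGroup.of i = FreeGroup.mk [(i, true)] from rfl, inv_mk]
      congr 1
  -- head of g⁻¹ * x is ℓ
  have hhead : (g⁻¹ * x).toWord.head? = some ℓ := (mem_Cfin_single ℓ _).1 hgx
  -- strict triangle inequality from hx
  have hxeq : g * (g⁻¹ * x) = x := by group
  have hlt : wl x < wl g + wl (g⁻¹ * x) := by
    have hle : wl x ≤ wl g + wl (g⁻¹ * x) := by
      have h := FreeGroup.norm_mul_le g (g⁻¹ * x)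
      rw [hxeq] at h
      exact h
    rcases lt_or_eq_of_le hle with h | h
    · exact h
    · exact absurd ⟨g⁻¹ * x, hxeq.symm, by rw [hxeq]; exact h⟩ hx
  -- the concatenation g.toWord ++ (g⁻¹x).toWord is not reduced
  have hxword : x.toWord = reduce (g.toWord ++ (g⁻¹ * x).toWord) := by
    conv_lhs => rw [← hxeq]
    rw [toWord_mul']
  have hnotred : reduce (g.toWord ++ (g⁻¹ * x).toWord) ≠ g.toWord ++ (g⁻¹ * x).toWord := by
    intro hcontra
    have heq : x.toWord.length = g.toWord.length + (g⁻¹ * x).toWord.length := by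
      rw [hxword, hcontra, List.length_append]
    exact hlt.ne (by simpa [wl] using heq)
  -- hence there's cancellation at the junction
  have hcancel : ∃ a ∈ g.toWord.getLast?, ∃ b ∈ (g⁻¹ * x).toWord.head?,
      a.1 = b.1 ∧ a.2 = !b.2 := by
    by_contra hcon
    push_neg at hcon
    exact hnotred (reduced_append _ _ (reduce_toWord g) (reduce_toWord (g⁻¹ * x))
      (fun a ha b hb hc => hcon a ha b hb hc.1 hc.2))
  obtain ⟨a, ha, b, hb, hab1, hab2⟩ := hcancel
  -- b = ℓ
  rw [hhead] at hb
  simp only [Option.mem_def, Option.some.injEq] at hb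
  rw [← hb] at hab1 hab2
  -- head of g⁻¹ is ℓ
  have hginv : g⁻¹.toWord.head? = some ℓ := by
    rw [toWord_inv]
    unfold FreeGroup.invRev
    rw [List.head?_reverse, List.getLast?_map]
    rw [show g.toWord.getLast? = some a from ha]
    simp only [Option.map_some]
    congr 1
    rw [hab1, hab2, Bool.not_not]
  exact (mem_Cfin_single ℓ _).2 hginv
end

section
/- Let g ∈ F_m \ {e} and let x ∈ F_m with x ∉ C_fin(g). Then x⁻¹·C_fin(g) = C_fin(x⁻¹·g), i.e. the set {x⁻¹·h : h ∈ C_fin(g)} equals C_fin(x⁻¹·g). -/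
namespace FreeGroup

variable {α : Type*}

theorem IsReduced.append_iff_of_getLast?_eq {A B C : List (α × Bool)} (hA : IsReduced A)
    (hB : IsReduced B) (hC : IsReduced C) (hAC : A.getLast? = C.getLast?) :
    IsReduced (A ++ B) ↔ IsReduced (C ++ B) := by
  simp only [IsReduced, List.isChain_append] at hA hB hC ⊢
  simp [hA, hB, hC, hAC]

variable [DecidableEq α]

theorem IsReduced.invRev {L : List (α × Bool)} (h : IsReduced L) : IsReduced (invRev L) := by
  rw [isReduced_iff_reduce_eq, reduce_invRev, h.reduce_eq]

/-- Reduction of `invRev M ++ L` cancels exactly the longest common prefix `c` of `M` and `L`. -/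
theorem exists_reduce_invRev_append {M L : List (α × Bool)} (hM : IsReduced M)
    (hL : IsReduced L) :
    ∃ c p q, M = c ++ p ∧ L = c ++ q ∧ reduce (invRev M ++ L) = invRev p ++ q := by
  induction M generalizing L with
  | nil => exact ⟨[], [], L, rfl, rfl, by simpa using hL.reduce_eq⟩
  | cons a M ih =>
    cases L with
    | nil => exact ⟨[], a :: M, [], rfl, rfl, by simpa using hM.invRev.reduce_eq⟩
    | cons b L =>
      by_cases hab : a = b
      · subst hab
        obtain ⟨c, p, q, rfl, rfl, hred⟩ := ih (hM.infix (List.suffix_cons a M).isInfix)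
          (hL.infix (List.suffix_cons a _).isInfix)
        refine ⟨a :: c, p, q, rfl, rfl, ?_⟩
        have hstep : Red.Step (invRev (a :: (c ++ p)) ++ a :: (c ++ q))
            (invRev (c ++ p) ++ (c ++ q)) := by
          simpa [invRev] using
            Red.Step.not (L₁ := invRev (c ++ p)) (L₂ := c ++ q) (x := a.1) (b := !a.2)
        rw [reduce.Step.eq hstep, hred]
      · refine ⟨[], a :: M, b :: L, rfl, rfl, IsReduced.reduce_eq ?_⟩
        have junction : ∀ x ∈ (invRev (a :: M)).getLast?, ∀ y ∈ (b :: L).head?,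
            x.1 = y.1 → x.2 = y.2 := by
          have hlast : (invRev (a :: M)).getLast? = some (a.1, !a.2) := by simp [invRev]
          simp only [hlast, List.head?_cons, Option.mem_some_iff, forall_eq']
          obtain ⟨a₁, a₂⟩ := a
          obtain ⟨b₁, b₂⟩ := b
          rintro (rfl : a₁ = b₁)
          cases a₂ <;> cases b₂ <;> simp_all
        exact List.isChain_append.2 ⟨hM.invRev, hL, junction⟩

theorem exists_toWord_inv_mul (x g : FreeGroup α) :
    ∃ c p q, x.toWord = c ++ p ∧ g.toWord = c ++ q ∧ (x⁻¹ * g).toWord = invRev p ++ q := by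
  rw [toWord_mul, toWord_inv]
  exact exists_reduce_invRev_append isReduced_toWord isReduced_toWord

theorem norm_mul_eq_add_iff (u v : FreeGroup α) :
    norm (u * v) = norm u + norm v ↔ IsReduced (u.toWord ++ v.toWord) := by
  rw [isReduced_iff_reduce_eq, ← toWord_mul]
  refine ⟨fun h => (toWord_mul_sublist u v).eq_of_length ?_, fun h => ?_⟩
  · rw [List.length_append]; exact h
  · rw [norm, h, List.length_append]; rfl

theorem norm_mul_eq_add_iff_of_getLast?_eq {u v : FreeGroup α}
    (huv : u.toWord.getLast? = v.toWord.getLast?) (y : FreeGroup α) :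
    norm (u * y) = norm u + norm y ↔ norm (v * y) = norm v + norm y := by
  rw [norm_mul_eq_add_iff, norm_mul_eq_add_iff]
  exact IsReduced.append_iff_of_getLast?_eq isReduced_toWord isReduced_toWord isReduced_toWord huv

end FreeGroup

open FreeGroup

theorem stmt5_general {m : ℕ} (g : FreeGroup (Fin m))
    (x : FreeGroup (Fin m)) (hx : x ∉ Cfin g) :
    (fun h => x⁻¹ * h) '' Cfin g = Cfin (x⁻¹ * g) := by
  obtain ⟨c, p, q, hxw, hgw, hxgw⟩ := exists_toWord_inv_mul x g
  have hq : q ≠ [] := by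
    rintro rfl
    refine hx ⟨g⁻¹ * x, (mul_inv_cancel_left g x).symm, ?_⟩
    have hnorm : (g⁻¹ * x).norm = p.length := by
      rw [← norm_inv_eq, mul_inv_rev, inv_inv, FreeGroup.norm, hxgw, List.append_nil,
        invRev_length]
    rw [mul_inv_cancel_left]
    change x.norm = g.norm + (g⁻¹ * x).norm
    rw [hnorm, FreeGroup.norm, FreeGroup.norm, hxw, hgw, List.append_nil, List.length_append]
  have hlast : g.toWord.getLast? = (x⁻¹ * g).toWord.getLast? := by
    rw [hgw, hxgw, List.getLast?_append_of_ne_nil _ hq, List.getLast?_append_of_ne_nil _ hq]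
  ext h
  constructor
  · rintro ⟨_, ⟨y, rfl, hy⟩, rfl⟩
    exact ⟨y, (mul_assoc _ _ _).symm, (norm_mul_eq_add_iff_of_getLast?_eq hlast y).1 hy⟩
  · rintro ⟨y, rfl, hy⟩
    exact ⟨g * y, ⟨y, rfl, (norm_mul_eq_add_iff_of_getLast?_eq hlast y).2 hy⟩,
      (mul_assoc _ _ _).symm⟩

/-- for `g ≠ e` and `x ∉ C_fin(g)` one has `x⁻¹·C_fin(g) = C_fin(x⁻¹·g)`. -/
theorem stmt5 {m : ℕ} (g : FreeGroup (Fin m)) (hg : g ≠ 1)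
    (x : FreeGroup (Fin m)) (hx : x ∉ Cfin g) :
    (fun h => x⁻¹ * h) '' Cfin g = Cfin (x⁻¹ * g) :=
  stmt5_general g x hx
end

section
/- Let μ be a probability measure on F_m, let g ∈ F_m \ {e}, and let B ⊆ F_m be a g-barrier. Then for every h ∈ C_fin(g) one has F_μ(e, h) = Σ_{b ∈ B} F_μ(e, b; B \ {b}) · F_μ(b, h). -/
open scoped BigOperators

/-- Restricted first-passage function `F_μ(x, y; S)`: the total weight of paths from `x`
to `y` that avoid `S ∪ {y}` before arriving at `y`. -/
noncomputable def FP {G : Type*} [Group G] (μ : G → ℝ) (x y : G) (S : Set G) : ℝ :=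
  ∑' k : ℕ,
    ∑' f : {f : Fin (k + 1) → G // f 0 = x ∧ f (Fin.last k) = y ∧
        ∀ j : Fin k, f j.castSucc ∉ S ∪ {y}},
      ∏ j : Fin k, μ ((f.1 j.castSucc)⁻¹ * f.1 j.succ)

/-- `μ` is a probability measure on `G`. -/
def IsProb {G : Type*} (μ : G → ℝ) : Prop := (∀ g, 0 ≤ μ g) ∧ ∑' g, μ g = 1

/-- `B` is a `g`-barrier: no path from `e` can reach the shadow of `g` avoiding `B`. -/
def IsBarrier {m : ℕ} (μ : FreeGroup (Fin m) → ℝ) (g : FreeGroup (Fin m))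
    (B : Set (FreeGroup (Fin m))) : Prop :=
  ∀ h ∈ Cfin g, FP μ 1 h B = 0

/-!
A path from `x` is encoded by its list of increments and weighted by the product of `μ` over
them. Cutting a first passage `e → h` at its first entrance into `B ∪ {h}`, at `b` say, is a
weight-preserving bijection onto pairs of a passage `e → b` avoiding `B ∪ {h}` and a first passage
`b → h`. Since `B` is a barrier, the passages `e → h` avoiding `B` have weight zero; so do the
paths `e → b` that avoid `B` but visit `h`, because their prefix up to `h` is such a passage. What
remains is the sum over `b ∈ B` of `F(e, b; B \ {b}) F(b, h)`. The real series in `FP` are handled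
through their `ℝ≥0∞` counterparts, which are finite: first passages form a prefix-free family of
words, so by Kraft's inequality their total weight is at most one.
-/

open scoped ENNReal

namespace FirstPassage

lemma tsum_subtype_insert_of_eq_zero {β : Type*} {f : β → ℝ≥0∞} {a : β} (ha : f a = 0)
    (s : Set β) : ∑' b : ↥(insert a s), f b = ∑' b : s, f b := by
  rw [tsum_subtype, tsum_subtype]
  refine tsum_congr fun b => ?_
  by_cases hb : b = a
  · subst hb
    simp [Set.indicator, ha]
  · by_cases hs : b ∈ s
    · rw [Set.indicator_of_mem (Set.mem_insert_of_mem a hs), Set.indicator_of_mem hs]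
    · rw [Set.indicator_of_notMem (by simp [hb, hs]), Set.indicator_of_notMem hs]

section PathWeight

variable {α : Type*} (ν : α → ℝ≥0∞)

noncomputable def pathWeight (ℓ : List α) : ℝ≥0∞ := (ℓ.map ν).prod

@[simp] lemma pathWeight_cons (a : α) (ℓ : List α) :
    pathWeight ν (a :: ℓ) = ν a * pathWeight ν ℓ := by
  simp [pathWeight]

@[simp] lemma pathWeight_append (p q : List α) :
    pathWeight ν (p ++ q) = pathWeight ν p * pathWeight ν q := by
  simp [pathWeight]

lemma pathWeight_ofFn {k : ℕ} (s : Fin k → α) :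
    pathWeight ν (List.ofFn s) = ∏ j, ν (s j) := by
  simp [pathWeight, List.map_ofFn, List.prod_ofFn]

variable {ν}

lemma tsum_pathWeight_length (hν : ∑' a, ν a = 1) (n : ℕ) :
    ∑' ℓ : {ℓ : List α // ℓ.length = n}, pathWeight ν ℓ = 1 := by
  induction n with
  | zero =>
    refine (tsum_eq_single (⟨[], rfl⟩ : {ℓ : List α // ℓ.length = 0}) fun ℓ hℓ => ?_).trans rfl
    exact absurd (Subtype.ext (List.eq_nil_of_length_eq_zero ℓ.2)) hℓ
  | succ n ih =>
    let cons : α × {ℓ : List α // ℓ.length = n} → {ℓ : List α // ℓ.length = n + 1} :=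
      fun q => ⟨q.1 :: q.2.1, by simp [q.2.2]⟩
    have hcons : Function.Injective cons := by
      rintro ⟨a, ℓ, hℓ⟩ ⟨a', ℓ', hℓ'⟩ h
      simp only [cons, Subtype.mk.injEq, List.cons.injEq] at h
      obtain ⟨rfl, rfl⟩ := h
      rfl
    have hrange : Set.range cons = Set.univ := by
      refine Set.eq_univ_of_forall fun ⟨ℓ, hℓ⟩ => ?_
      obtain ⟨a, t, rfl⟩ := List.exists_cons_of_length_eq_add_one hℓ
      exact ⟨(a, ⟨t, by simpa using hℓ⟩), rfl⟩
    rw [← hcons.tsum_eq (hrange ▸ Set.subset_univ _), ENNReal.tsum_prod']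
    simp only [cons, pathWeight_cons, ENNReal.tsum_mul_left, ih, mul_one, hν]

/-- Kraft's inequality. -/
theorem tsum_pathWeight_le_one_of_prefixFree (hν : ∑' a, ν a = 1) {P : Set (List α)}
    (hP : ∀ p ∈ P, ∀ q, p ++ q ∈ P → q = []) : ∑' ℓ : P, pathWeight ν ℓ ≤ 1 := by
  refine ENNReal.summable.tsum_le_of_sum_le fun s => ?_
  set N := s.sup fun ℓ => ℓ.1.length
  let pad : (Σ ℓ : s, {t : List α // t.length = N - ℓ.1.1.length}) →
      {u : List α // u.length = N} := fun z =>
    ⟨z.1.1.1 ++ z.2.1, by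
      have : z.1.1.1.length ≤ N := Finset.le_sup (f := fun ℓ : P => ℓ.1.length) z.1.2
      rw [List.length_append, z.2.2]
      omega⟩
  have hpad : Function.Injective pad := by
    rintro ⟨⟨⟨p, hp⟩, _⟩, t, _⟩ ⟨⟨⟨p', hp'⟩, _⟩, t', _⟩ h
    have h : p ++ t = p' ++ t' := congrArg Subtype.val h
    obtain rfl : p = p' := by
      rcases List.append_eq_append_iff.mp h with ⟨r, rfl, -⟩ | ⟨r, rfl, -⟩
      · rw [hP p hp r hp', List.append_nil]
      · rw [hP p' hp' r hp, List.append_nil]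
    obtain rfl : t = t' := List.append_cancel_left h
    rfl
  calc ∑ ℓ ∈ s, pathWeight ν ℓ
      = ∑' z, pathWeight ν (pad z).1 := by
        rw [ENNReal.tsum_sigma', ← Finset.tsum_subtype]
        refine tsum_congr fun ℓ => ?_
        simp only [pad, pathWeight_append, ENNReal.tsum_mul_left, tsum_pathWeight_length hν,
          mul_one]
    _ ≤ ∑' u : {u : List α // u.length = N}, pathWeight ν u :=
        ENNReal.tsum_comp_le_tsum_of_injective hpad _
    _ = 1 := tsum_pathWeight_length hν N

end PathWeight

variable {G : Type*} [Group G]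

def position (x : G) (ℓ : List G) (i : ℕ) : G := x * (ℓ.take i).prod

section Position

variable (x : G) (ℓ : List G)

@[simp] lemma position_zero : position x ℓ 0 = x := by simp [position]

lemma position_of_length_le {i : ℕ} (h : ℓ.length ≤ i) : position x ℓ i = x * ℓ.prod := by
  rw [position, List.take_of_length_le h]

lemma position_take {i j : ℕ} (h : i ≤ j) : position x (ℓ.take j) i = position x ℓ i := by
  simp [position, List.take_take, Nat.min_eq_left h]

lemma position_succ {i : ℕ} (h : i < ℓ.length) : position x ℓ (i + 1) = position x ℓ i * ℓ[i] := by
  simp [position, List.prod_take_succ _ _ h, mul_assoc]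

lemma position_drop (j i : ℕ) : position (position x ℓ j) (ℓ.drop j) i = position x ℓ (j + i) := by
  simp [position, List.take_add, mul_assoc]

lemma position_append_of_le {p : List G} (q : List G) {i : ℕ} (h : i ≤ p.length) :
    position x (p ++ q) i = position x p i := by
  simp [position, List.take_append_of_le_length h]

lemma position_append_add (p q : List G) (i : ℕ) :
    position x (p ++ q) (p.length + i) = position (x * p.prod) q i := by
  simp [position, List.take_add, mul_assoc]

end Position

/-- `ℓ` lists the increments of the path; compare the paths summed over in `FP`. -/
def IsPassage (x y : G) (S : Set G) (ℓ : List G) : Prop :=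
  x * ℓ.prod = y ∧ ∀ i < ℓ.length, position x ℓ i ∉ S ∪ {y}

noncomputable def passageWeight (ν : G → ℝ≥0∞) (x y : G) (S : Set G) : ℝ≥0∞ :=
  ∑' ℓ : {ℓ : List G // IsPassage x y S ℓ}, pathWeight ν ℓ

section Passage

variable {x y b : G} {S T : Set G} {ℓ p q : List G}

lemma IsPassage.mono (h : IsPassage x y T ℓ) (hST : S ⊆ T) : IsPassage x y S ℓ :=
  ⟨h.1, fun i hi hS => h.2 i hi (Set.union_subset_union_left _ hST hS)⟩

lemma isPassage_diff_singleton : IsPassage x y (S \ {y}) = IsPassage x y S := by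
  ext ℓ
  simp [IsPassage]

lemma IsPassage.eq_nil_of_append (h : IsPassage x y S (p ++ q)) (hp : x * p.prod ∈ S ∪ {y}) :
    q = [] := by
  by_contra hq
  have hlt : p.length < (p ++ q).length := by
    simpa using List.length_pos_iff.mpr hq
  have := h.2 p.length hlt
  rw [position_append_of_le x q le_rfl, position_of_length_le x p le_rfl] at this
  exact this hp

lemma IsPassage.append (hp : IsPassage x b T p) (hq : IsPassage b y S q) (hST : S ∪ {y} ⊆ T) :
    IsPassage x y S (p ++ q) := by
  refine ⟨by rw [List.prod_append, ← mul_assoc, hp.1, hq.1], fun i hi => ?_⟩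
  rcases lt_or_ge i p.length with h | h
  · rw [position_append_of_le x q h.le]
    exact fun hm => hp.2 i h (Or.inl (hST hm))
  · obtain ⟨j, rfl⟩ := Nat.exists_eq_add_of_le h
    rw [position_append_add, hp.1]
    exact hq.2 j (by simp at hi; omega)

lemma isPassage_take {i : ℕ} (h : ∀ j < i, position x ℓ j ∉ S ∪ {position x ℓ i}) :
    IsPassage x (position x ℓ i) S (ℓ.take i) :=
  ⟨rfl, fun j hj => by
    rw [List.length_take] at hj
    rw [position_take x ℓ (le_of_lt (lt_of_lt_of_le hj (min_le_left _ _)))]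
    exact h j (lt_of_lt_of_le hj (min_le_left _ _))⟩

lemma IsPassage.drop (h : IsPassage x y S ℓ) (i : ℕ) : IsPassage (position x ℓ i) y S (ℓ.drop i) :=
  ⟨by rw [position, mul_assoc, ← List.prod_append, List.take_append_drop, h.1],
    fun j hj => by
      rw [position_drop]
      exact h.2 _ (by simp at hj; omega)⟩

end Passage

section PassageWeight

variable {ν : G → ℝ≥0∞} {x y : G} {S : Set G}

lemma passageWeight_eq_tsum_length (ν : G → ℝ≥0∞) (x y : G) (S : Set G) :
    passageWeight ν x y S =
      ∑' k, ∑' p : {p : {ℓ : List G // IsPassage x y S ℓ} // p.1.length = k}, pathWeight ν p.1.1 :=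
  (ENNReal.tsum_fiberwise _ fun p : {ℓ : List G // IsPassage x y S ℓ} => p.1.length).symm

lemma passageWeight_le_one (hν : ∑' a, ν a = 1) (x y : G) (S : Set G) :
    passageWeight ν x y S ≤ 1 :=
  tsum_pathWeight_le_one_of_prefixFree hν (P := {ℓ | IsPassage x y S ℓ})
    fun _ hp _ hpq => IsPassage.eq_nil_of_append hpq (Or.inr hp.1)

lemma passageWeight_diff_singleton : passageWeight ν x y (S \ {y}) = passageWeight ν x y S := by
  rw [passageWeight, isPassage_diff_singleton, passageWeight]

/-- The prefix of `ℓ` up to its first visit to `y` is a passage `x → y` avoiding `S`. -/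
lemma pathWeight_eq_zero_of_visit (hy : passageWeight ν x y S = 0) {ℓ : List G}
    (hS : ∀ j < ℓ.length, position x ℓ j ∉ S) (hvisit : ∃ i, i ≤ ℓ.length ∧ position x ℓ i = y) :
    pathWeight ν ℓ = 0 := by
  classical
  set i := Nat.find hvisit
  obtain ⟨hi, hiy⟩ : i ≤ ℓ.length ∧ position x ℓ i = y := Nat.find_spec hvisit
  have hprefix : IsPassage x y S (ℓ.take i) := hiy ▸ isPassage_take fun j hj hm =>
    hm.elim (hS j (lt_of_lt_of_le hj hi)) fun hjy =>
      Nat.find_min hvisit hj ⟨(lt_of_lt_of_le hj hi).le, hjy.trans hiy⟩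
  have hzero : pathWeight ν (ℓ.take i) = 0 :=
    le_antisymm (hy ▸ ENNReal.le_tsum (f := fun ℓ : {ℓ // IsPassage x y S ℓ} => pathWeight ν ℓ)
      ⟨_, hprefix⟩) bot_le
  rw [← List.take_append_drop i ℓ, pathWeight_append, hzero, zero_mul]

lemma passageWeight_insert_of_eq_zero (hy : passageWeight ν x y S = 0) (b : G) :
    passageWeight ν x b (insert y S) = passageWeight ν x b S := by
  have hsupport : Function.support (fun p : {ℓ : List G // IsPassage x b S ℓ} => pathWeight ν p.1) ⊆
      {p | IsPassage x b (insert y S) p.1} := by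
    rintro ⟨ℓ, hS⟩ hne
    change IsPassage x b (insert y S) ℓ
    by_contra hyS
    refine hne (pathWeight_eq_zero_of_visit hy (fun j hj hjS => hS.2 j hj (Or.inl hjS)) ?_)
    obtain ⟨i, hi, hmem⟩ : ∃ i < ℓ.length, position x ℓ i ∈ insert y S ∪ {b} := by
      by_contra hall
      exact hyS ⟨hS.1, fun i hi hmem => hall ⟨i, hi, hmem⟩⟩
    refine ⟨i, hi.le, ?_⟩
    rcases hmem with (hiy | hiS) | hib
    · exact hiy
    · exact absurd (Or.inl hiS) (hS.2 i hi)
    · exact absurd (Or.inr hib) (hS.2 i hi)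
  calc passageWeight ν x b (insert y S)
      = ∑' p : {p : {ℓ : List G // IsPassage x b S ℓ} // IsPassage x b (insert y S) p.1},
          pathWeight ν p.1.1 :=
        ((Equiv.subtypeSubtypeEquivSubtype fun h => h.mono (Set.subset_insert y S)).tsum_eq
          fun ℓ => pathWeight ν ℓ.1).symm
    _ = passageWeight ν x b S := tsum_subtype_eq_of_support_subset hsupport

section FirstEntrance

variable {T : Set G}

def concatPassages (hST : S ∪ {y} ⊆ T)
    (z : Σ b : T, {p : List G // IsPassage x b T p} × {q : List G // IsPassage (b : G) y S q}) :
    {ℓ : List G // IsPassage x y S ℓ} :=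
  ⟨z.2.1.1 ++ z.2.2.1, z.2.1.2.append z.2.2.2 hST⟩

lemma concatPassages_bijective (hST : S ∪ {y} ⊆ T) :
    Function.Bijective (concatPassages (x := x) hST) := by
  constructor
  · rintro ⟨⟨b, hb⟩, ⟨p, hp⟩, ⟨q, hq⟩⟩ ⟨⟨b', hb'⟩, ⟨p', hp'⟩, ⟨q', hq'⟩⟩ h
    have hpq : p ++ q = p' ++ q' := congrArg Subtype.val h
    obtain rfl : p = p' := by
      rcases List.append_eq_append_iff.mp hpq with ⟨r, rfl, -⟩ | ⟨r, rfl, -⟩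
      · rw [hp'.eq_nil_of_append (Or.inl (hp.1 ▸ hb)), List.append_nil]
      · rw [hp.eq_nil_of_append (Or.inl (hp'.1 ▸ hb')), List.append_nil]
    obtain rfl : q = q' := List.append_cancel_left hpq
    obtain rfl : b = b' := hp.1.symm.trans hp'.1
    rfl
  · rintro ⟨ℓ, hℓ⟩
    classical
    have hentry : ∃ i, position x ℓ i ∈ T :=
      ⟨ℓ.length, by rw [position_of_length_le x ℓ le_rfl, hℓ.1]; exact hST (Or.inr rfl)⟩
    set i := Nat.find hentry
    have hiT : position x ℓ i ∈ T := Nat.find_spec hentry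
    have hprefix : IsPassage x (position x ℓ i) T (ℓ.take i) :=
      isPassage_take fun j hj hm =>
        Nat.find_min hentry hj (hm.elim id fun hji => hji ▸ hiT)
    exact ⟨⟨⟨_, hiT⟩, ⟨_, hprefix⟩, ⟨_, hℓ.drop i⟩⟩, Subtype.ext (List.take_append_drop i ℓ)⟩

theorem passageWeight_eq_tsum_firstEntrance (ν : G → ℝ≥0∞) (hST : S ∪ {y} ⊆ T) :
    passageWeight ν x y S = ∑' b : T, passageWeight ν x b T * passageWeight ν (b : G) y S := by
  calc passageWeight ν x y S
      = ∑' z, pathWeight ν (concatPassages hST z).1 :=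
        ((Equiv.ofBijective _ (concatPassages_bijective hST)).tsum_eq
          fun ℓ => pathWeight ν ℓ.1).symm
    _ = ∑' z : Σ b : T, {p : List G // IsPassage x b T p} × {q : List G // IsPassage (b : G) y S q},
          pathWeight ν z.2.1 * pathWeight ν z.2.2 :=
        tsum_congr fun z => pathWeight_append ν _ _
    _ = _ := by
        rw [ENNReal.tsum_sigma']
        refine tsum_congr fun b => ?_
        dsimp only
        rw [ENNReal.tsum_prod', passageWeight, passageWeight, ← ENNReal.tsum_mul_right]
        refine tsum_congr fun p => ?_
        dsimp only
        exact ENNReal.tsum_mul_left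

end FirstEntrance

theorem passageWeight_eq_tsum_of_eq_zero (ν : G → ℝ≥0∞) {B : Set G}
    (hB : passageWeight ν x y B = 0) :
    passageWeight ν x y ∅ =
      ∑' b : B, passageWeight ν x b (B \ {(b : G)}) * passageWeight ν b y ∅ := by
  calc passageWeight ν x y ∅
      = ∑' b : ↥(insert y B), passageWeight ν x b (insert y B) * passageWeight ν b y ∅ :=
        passageWeight_eq_tsum_firstEntrance ν (by simp)
    _ = ∑' b : ↥(insert y B), passageWeight ν x b B * passageWeight ν b y ∅ := by
        simp only [passageWeight_insert_of_eq_zero hB]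
    _ = ∑' b : B, passageWeight ν x b B * passageWeight ν b y ∅ :=
        tsum_subtype_insert_of_eq_zero (f := fun b => passageWeight ν x b B * passageWeight ν b y ∅)
          (by simp [hB]) B
    _ = _ := by simp only [passageWeight_diff_singleton]

end PassageWeight

section RealValued

def increments {k : ℕ} (f : Fin (k + 1) → G) : Fin k → G :=
  fun j => (f j.castSucc)⁻¹ * f j.succ

lemma position_ofFn_increments {k : ℕ} (f : Fin (k + 1) → G) (i : Fin (k + 1)) :
    position (f 0) (List.ofFn (increments f)) i = f i := by
  induction i using Fin.induction with
  | zero => simp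
  | succ i ih =>
    have hi : (i : ℕ) < (List.ofFn (increments f)).length := by simp
    rw [Fin.val_castSucc] at ih
    rw [Fin.val_succ, position_succ _ _ hi, ih, List.getElem_ofFn]
    simp [increments]

def passageSliceEquiv (x y : G) (S : Set G) (k : ℕ) :
    {f : Fin (k + 1) → G // f 0 = x ∧ f (Fin.last k) = y ∧ ∀ j : Fin k, f j.castSucc ∉ S ∪ {y}} ≃
      {p : {ℓ : List G // IsPassage x y S ℓ} // p.1.length = k} where
  toFun f := ⟨⟨List.ofFn (increments f.1), by
      obtain ⟨f, rfl, rfl, hf⟩ := f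
      refine ⟨?_, fun i hi => ?_⟩
      · have := position_ofFn_increments f (Fin.last k)
        rwa [position_of_length_le _ _ (by simp)] at this
      · have hik : i < k := by simpa using hi
        have := position_ofFn_increments f (Fin.castSucc ⟨i, hik⟩)
        rw [Fin.val_castSucc] at this
        rw [this]
        exact hf _⟩, List.length_ofFn⟩
  invFun p := ⟨fun i => position x p.1.1 i, position_zero _ _, by
      change position x p.1.1 k = y
      rw [position_of_length_le _ _ p.2.le]
      exact p.1.2.1, fun j => p.1.2.2 j (by rw [p.2]; exact j.2)⟩
  left_inv := by
    rintro ⟨f, rfl, -, -⟩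
    ext i
    exact position_ofFn_increments f i
  right_inv := by
    rintro ⟨⟨ℓ, hℓ⟩, rfl⟩
    refine Subtype.ext (Subtype.ext (List.ext_getElem (by simp) fun i h₁ h₂ => ?_))
    simp [increments, position_succ _ _ h₂]

lemma IsProb.tsum_ofReal_eq_one {β : Type*} {μ : β → ℝ} (hμ : IsProb μ) :
    ∑' a, ENNReal.ofReal (μ a) = 1 := by
  have hsum : Summable μ := by
    by_contra hns
    simpa [tsum_eq_zero_of_not_summable hns] using hμ.2
  rw [← ENNReal.ofReal_tsum_of_nonneg hμ.1 hsum, hμ.2, ENNReal.ofReal_one]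

lemma FP_eq_toReal_passageWeight {μ : G → ℝ} (hμ : ∀ a, 0 ≤ μ a)
    (hν : ∑' a, ENNReal.ofReal (μ a) = 1) (x y : G) (S : Set G) :
    FP μ x y S = (passageWeight (fun a => ENNReal.ofReal (μ a)) x y S).toReal := by
  set ν : G → ℝ≥0∞ := fun a => ENNReal.ofReal (μ a)
  have hslice : ∀ k, (∑' p : {p : {ℓ : List G // IsPassage x y S ℓ} // p.1.length = k},
      pathWeight ν p.1.1) ≤ passageWeight ν x y S := fun k =>
    (ENNReal.le_tsum k).trans_eq (passageWeight_eq_tsum_length ν x y S).symm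
  have hreal : ∀ k, (∑' f : {f : Fin (k + 1) → G // f 0 = x ∧ f (Fin.last k) = y ∧
      ∀ j : Fin k, f j.castSucc ∉ S ∪ {y}}, ∏ j : Fin k, μ ((f.1 j.castSucc)⁻¹ * f.1 j.succ)) =
      (∑' p : {p : {ℓ : List G // IsPassage x y S ℓ} // p.1.length = k},
        pathWeight ν p.1.1).toReal := fun k => by
    rw [← (passageSliceEquiv x y S k).tsum_eq, ENNReal.tsum_toReal_eq]
    · refine tsum_congr fun f => ?_
      simp [passageSliceEquiv, pathWeight_ofFn, ENNReal.toReal_prod, ENNReal.toReal_ofReal (hμ _),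
        increments, ν]
    · exact fun f => by simp [passageSliceEquiv, pathWeight_ofFn, ν, ENNReal.prod_ne_top]
  rw [FP, tsum_congr hreal, ← ENNReal.tsum_toReal_eq fun k =>
    ne_top_of_le_ne_top ENNReal.one_ne_top ((hslice k).trans (passageWeight_le_one hν x y S)),
    passageWeight_eq_tsum_length]

end RealValued

end FirstPassage

open FirstPassage

theorem stmt7_general {m : ℕ} (μ : FreeGroup (Fin m) → ℝ) (hμ : IsProb μ)
    (g : FreeGroup (Fin m)) (B : Set (FreeGroup (Fin m)))
    (hB : IsBarrier μ g B) (h : FreeGroup (Fin m)) (hh : h ∈ Cfin g) :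
    FP μ 1 h ∅ = ∑' b : B, FP μ 1 b (B \ {(b : FreeGroup (Fin m))}) * FP μ b h ∅ := by
  set ν : FreeGroup (Fin m) → ℝ≥0∞ := fun a => ENNReal.ofReal (μ a)
  have hν : ∑' a, ν a = 1 := hμ.tsum_ofReal_eq_one
  have hFP : ∀ x y S, FP μ x y S = (passageWeight ν x y S).toReal :=
    FP_eq_toReal_passageWeight hμ.1 hν
  have hfin : ∀ x y S, passageWeight ν x y S ≠ ∞ := fun x y S =>
    ne_top_of_le_ne_top ENNReal.one_ne_top (passageWeight_le_one hν x y S)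
  have hbarrier : passageWeight ν 1 h B = 0 := by
    have := hB h hh
    rwa [hFP, ENNReal.toReal_eq_zero_iff, or_iff_left (hfin _ _ _)] at this
  simp only [hFP]
  rw [passageWeight_eq_tsum_of_eq_zero ν hbarrier,
    ENNReal.tsum_toReal_eq fun b => ENNReal.mul_ne_top (hfin _ _ _) (hfin _ _ _)]
  simp only [ENNReal.toReal_mul]

/-- Lemma 1: if `B` is a `g`-barrier then for every `h ∈ C_fin(g)`,
`F_μ(e,h) = Σ_{b ∈ B} F_μ(e,b; B \ {b}) F_μ(b,h)`. -/
theorem stmt7 {m : ℕ} (μ : FreeGroup (Fin m) → ℝ) (hμ : IsProb μ)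
    (g : FreeGroup (Fin m)) (hg : g ≠ 1) (B : Set (FreeGroup (Fin m)))
    (hB : IsBarrier μ g B) (h : FreeGroup (Fin m)) (hh : h ∈ Cfin g) :
    FP μ 1 h ∅ = ∑' b : B, FP μ 1 b (B \ {(b : FreeGroup (Fin m))}) * FP μ b h ∅ :=
  stmt7_general μ hμ g B hB h hh
end

section
/- Let μ be a probability measure on F_m, let g ∈ F_m \ {e}, and let B ⊆ F_m be a strong g-barrier. Then for every h ∈ C_fin(g) and every x ∈ F_m \ C_fin(g) one has F_μ(x, h) = Σ_{b ∈ B} F_μ(x, b; B \ {b}) · F_μ(b, h). -/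
/-!
Paths are encoded by their lists of increments and all sums are taken in `ℝ≥0∞`, where they
are unconditional. The first-passage lists from `x` to `y` form a prefix-free set of words, so
by Kraft's inequality every first-passage sum is at most `1`, and `FP` is the real part of the
`ℝ≥0∞`-valued sum. Since `B` is a strong barrier, the paths from `x` to `h` that avoid `B` have
total weight `0`; every other path splits uniquely at its first visit `b ∈ B` into a
first-passage path from `x` to `b` avoiding `B` and a first-passage path from `b` to `h`.
Conversely such a pair glues to a first-passage path to `h`, unless its first half already
visits `h`, which again forces weight `0`.
-/

open scoped BigOperators

/-- `B` is a strong `g`-barrier. -/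
def IsStrongBarrier {m : ℕ} (μ : FreeGroup (Fin m) → ℝ) (g : FreeGroup (Fin m))
    (B : Set (FreeGroup (Fin m))) : Prop :=
  B ⊆ Cfin g ∧ ∀ h ∈ Cfin g, ∀ h' ∉ Cfin g, FP μ h' h B = 0

open scoped ENNReal

section Lists

variable {α : Type*}

variable (α) in
def listLengthSuccEquiv (n : ℕ) :
    {v : List α // v.length = n + 1} ≃ α × {v : List α // v.length = n} where
  toFun v := (v.1.head (List.ne_nil_of_length_eq_add_one v.2), ⟨v.1.tail, by simp [v.2]⟩)
  invFun p := ⟨p.1 :: p.2.1, by simp [p.2.2]⟩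
  left_inv v := Subtype.ext (List.cons_head_tail _)
  right_inv _ := rfl

theorem tsum_prod_map_of_length_eq (ν : α → ℝ≥0∞) (n : ℕ) :
    ∑' v : {v : List α // v.length = n}, (v.1.map ν).prod = (∑' a, ν a) ^ n := by
  induction n with
  | zero =>
    have hnil (v : {v : List α // v.length = 0}) : v = ⟨[], rfl⟩ :=
      Subtype.ext (List.eq_nil_of_length_eq_zero v.2)
    rw [tsum_eq_single ⟨[], rfl⟩ fun v hv => absurd (hnil v) hv]
    simp
  | succ n ih =>
    have hcons (p : α × {v : List α // v.length = n}) :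
        (((listLengthSuccEquiv α n).symm p).1.map ν).prod = ν p.1 * (p.2.1.map ν).prod :=
      List.prod_cons
    rw [← (listLengthSuccEquiv α n).symm.tsum_eq]
    simp only [hcons]
    rw [ENNReal.tsum_prod']
    simp only [ENNReal.tsum_mul_left, ENNReal.tsum_mul_right, ih, pow_succ']

/-- Kraft's inequality. -/
theorem tsum_prod_map_le_one_of_prefixFree {ν : α → ℝ≥0∞} (hν : ∑' a, ν a = 1)
    {P : Set (List α)} (hP : ∀ l ∈ P, ∀ l' ∈ P, l <+: l' → l = l') :
    ∑' l : P, (l.1.map ν).prod ≤ 1 := by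
  refine ENNReal.summable.tsum_le_of_sum_le fun s => ?_
  set n := s.sup fun l => l.1.length
  have hle (l : s) : l.1.1.length ≤ n := Finset.le_sup (f := fun l : P => l.1.length) l.2
  let pad (z : Σ l : s, {c : List α // c.length = n - l.1.1.length}) :
      {v : List α // v.length = n} :=
    ⟨z.1.1.1 ++ z.2.1, by simp [z.2.2, hle z.1]⟩
  have hpad : Function.Injective pad := by
    rintro ⟨l, c⟩ ⟨l', c'⟩ h
    have happ : l.1.1 ++ c.1 = l'.1.1 ++ c'.1 := congrArg Subtype.val h
    obtain rfl : l = l' := by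
      rcases List.prefix_or_prefix_of_prefix (List.prefix_append l.1.1 c.1)
        (happ ▸ List.prefix_append l'.1.1 c'.1) with hpre | hpre
      · exact Subtype.ext (Subtype.ext (hP _ l.1.2 _ l'.1.2 hpre))
      · exact (Subtype.ext (Subtype.ext (hP _ l'.1.2 _ l.1.2 hpre))).symm
    obtain rfl : c = c' := Subtype.ext (List.append_cancel_left happ)
    rfl
  calc ∑ l ∈ s, (l.1.map ν).prod
      = ∑' l : s, ∑' c : {c : List α // c.length = n - l.1.1.length},
          (l.1.1.map ν).prod * (c.1.map ν).prod := by
        simp only [ENNReal.tsum_mul_left, tsum_prod_map_of_length_eq, hν, one_pow, mul_one]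
        exact (Finset.tsum_subtype s _).symm
    _ = ∑' z, ((pad z).1.map ν).prod := by
        rw [ENNReal.tsum_sigma']
        simp [pad]
    _ ≤ ∑' v : {v : List α // v.length = n}, (v.1.map ν).prod :=
        ENNReal.tsum_comp_le_tsum_of_injective hpad _
    _ = 1 := by rw [tsum_prod_map_of_length_eq, hν, one_pow]

theorem prod_map_take_mul_drop (ν : α → ℝ≥0∞) (l : List α) (t : ℕ) :
    ((l.take t).map ν).prod * ((l.drop t).map ν).prod = (l.map ν).prod := by
  rw [← List.prod_append, ← List.map_append, List.take_append_drop]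

theorem toReal_prod_map_ofReal {μ : α → ℝ} (hμ : ∀ a, 0 ≤ μ a) (l : List α) :
    ((l.map fun a => ENNReal.ofReal (μ a)).prod).toReal = (l.map μ).prod := by
  change ENNReal.toRealHom _ = _
  rw [map_list_prod, List.map_map]
  exact congrArg List.prod (List.map_congr_left fun a _ => ENNReal.toReal_ofReal (hμ a))

end Lists

theorem IsProb.tsum_ofReal_eq_one {α : Type*} {μ : α → ℝ} (hμ : IsProb μ) :
    ∑' a, ENNReal.ofReal (μ a) = 1 := by
  have hs : Summable μ := by
    by_contra hs
    simpa [tsum_eq_zero_of_not_summable hs] using hμ.2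
  rw [← ENNReal.ofReal_tsum_of_nonneg hμ.1 hs, hμ.2, ENNReal.ofReal_one]

section FirstPassage

variable {G : Type*} [Group G]

/-- A path from `x` is encoded by its list `l` of increments: its `j`-th vertex is
`x * (l.take j).prod`. -/
def firstPassage (x y : G) (S : Set G) : Set (List G) :=
  {l | x * l.prod = y ∧ ∀ j < l.length, x * (l.take j).prod ∉ S ∪ {y}}

noncomputable def firstPassageSum (ν : G → ℝ≥0∞) (x y : G) (S : Set G) : ℝ≥0∞ :=
  ∑' l : firstPassage x y S, (l.1.map ν).prod

variable {ν : G → ℝ≥0∞} {x y h : G} {S B : Set G}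

theorem firstPassage_diff_singleton : firstPassage x y (S \ {y}) = firstPassage x y S := by
  simp only [firstPassage, Set.sdiff_union_self]

theorem firstPassageSum_diff_singleton :
    firstPassageSum ν x y (S \ {y}) = firstPassageSum ν x y S := by
  rw [firstPassageSum, firstPassage_diff_singleton, firstPassageSum]

theorem eq_of_prefix_of_mem_firstPassage {y' : G} {S' : Set G} {l l' : List G}
    (hl : l ∈ firstPassage x y S) (hl' : l' ∈ firstPassage x y' S') (hy : y ∈ S' ∪ {y'})
    (hpre : l <+: l') : l = l' := by
  by_contra hne
  have hlt : l.length < l'.length :=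
    lt_of_le_of_ne hpre.length_le (mt hpre.eq_of_length hne)
  have hvisit := hl'.2 l.length hlt
  rw [← List.prefix_iff_eq_take.mp hpre, hl.1] at hvisit
  exact hvisit hy

theorem firstPassageSum_le_one (hν : ∑' g, ν g = 1) :
    firstPassageSum ν x y S ≤ 1 :=
  tsum_prod_map_le_one_of_prefixFree hν fun _ hl _ hl' =>
    eq_of_prefix_of_mem_firstPassage hl hl' (Or.inr rfl)

theorem take_mem_firstPassage {l : List G} {j : ℕ}
    (h : ∀ i < j, x * (l.take i).prod ∉ S ∪ {x * (l.take j).prod}) :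
    l.take j ∈ firstPassage x (x * (l.take j).prod) S := by
  refine ⟨rfl, fun i hi => ?_⟩
  rw [List.length_take] at hi
  rw [List.take_take, min_eq_left (by omega)]
  exact h i (by omega)

theorem drop_mem_firstPassage {l : List G} (hl : l ∈ firstPassage x y S) (t : ℕ) :
    l.drop t ∈ firstPassage (x * (l.take t).prod) y S := by
  refine ⟨by rw [mul_assoc, List.prod_take_mul_prod_drop, hl.1], fun i hi => ?_⟩
  rw [List.length_drop] at hi
  rw [mul_assoc, ← List.prod_append, ← List.take_add]
  exact hl.2 _ (by omega)

theorem append_mem_firstPassage {b : G} {T : Set G} {l₁ l₂ : List G}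
    (h₁ : l₁ ∈ firstPassage x b T) (h₂ : l₂ ∈ firstPassage b y S)
    (havoid : ∀ j < l₁.length, x * (l₁.take j).prod ∉ S ∪ {y}) :
    l₁ ++ l₂ ∈ firstPassage x y S := by
  refine ⟨by rw [List.prod_append, ← mul_assoc, h₁.1, h₂.1], fun j hj => ?_⟩
  rw [List.length_append] at hj
  rw [List.take_append]
  rcases lt_or_ge j l₁.length with hj₁ | hj₁
  · rw [Nat.sub_eq_zero_of_le hj₁.le, List.take_zero, List.append_nil]
    exact havoid j hj₁
  · rw [List.take_of_length_le hj₁, List.prod_append, ← mul_assoc, h₁.1]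
    exact h₂.2 _ (by omega)

theorem prod_map_eq_zero_of_visits (h0 : firstPassageSum ν x h B = 0) {l : List G}
    (hB : ∀ j < l.length, x * (l.take j).prod ∉ B)
    (hvisit : ∃ j < l.length, x * (l.take j).prod = h) :
    (l.map ν).prod = 0 := by
  classical
  set t := Nat.find hvisit
  obtain ⟨htl, hth⟩ : t < l.length ∧ x * (l.take t).prod = h := Nat.find_spec hvisit
  have hbefore : ∀ i < t, x * (l.take i).prod ∉ B ∪ {x * (l.take t).prod} := by
    rintro i hi (hiB | hih)
    · exact hB i (hi.trans htl) hiB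
    · exact Nat.find_min hvisit hi ⟨hi.trans htl, hih.trans hth⟩
  have hmem : l.take t ∈ firstPassage x h B := hth ▸ take_mem_firstPassage hbefore
  have hzero : ((l.take t).map ν).prod = 0 :=
    le_antisymm (h0 ▸ ENNReal.le_tsum (⟨_, hmem⟩ : firstPassage x h B)) bot_le
  rw [← prod_map_take_mul_drop ν l t, hzero, zero_mul]

theorem exists_firstPassage_split_of_prod_map_ne_zero (h0 : firstPassageSum ν x h B = 0)
    {l : List G} (hl : l ∈ firstPassage x h ∅) (hw : (l.map ν).prod ≠ 0) :
    ∃ t, x * (l.take t).prod ∈ B ∧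
      l.take t ∈ firstPassage x (x * (l.take t).prod) B := by
  classical
  have hvisit : ∃ t, x * (l.take t).prod ∈ B := by
    by_contra! hnot
    refine hw (le_antisymm
      (h0 ▸ ENNReal.le_tsum (⟨l, hl.1, fun j hj => ?_⟩ : firstPassage x h B)) bot_le)
    rintro (hjB | hjh)
    · exact hnot j hjB
    · exact hl.2 j hj (Or.inr hjh)
  have htB := Nat.find_spec hvisit
  refine ⟨_, htB, take_mem_firstPassage fun i hi hiB => ?_⟩
  rw [Set.union_singleton, Set.insert_eq_of_mem htB] at hiB
  exact Nat.find_min hvisit hi hiB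

theorem append_mem_firstPassage_of_prod_map_ne_zero (h0 : firstPassageSum ν x h B = 0) {b : G}
    {l₁ l₂ : List G} (h₁ : l₁ ∈ firstPassage x b B) (h₂ : l₂ ∈ firstPassage b h ∅)
    (hw : (l₁.map ν).prod ≠ 0) : l₁ ++ l₂ ∈ firstPassage x h ∅ :=
  append_mem_firstPassage h₁ h₂ fun j hj hjh =>
    hw (prod_map_eq_zero_of_visits h0 (fun i hi hiB => h₁.2 i hi (Or.inl hiB))
      ⟨j, hj, by simpa using hjh⟩)

theorem eq_of_append_eq_of_mem_firstPassage {b b' : G} (hb : b ∈ B) (hb' : b' ∈ B)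
    {l₁ l₁' l₂ l₂' : List G} (h₁ : l₁ ∈ firstPassage x b B)
    (h₁' : l₁' ∈ firstPassage x b' B)
    (h : l₁ ++ l₂ = l₁' ++ l₂') : l₁ = l₁' := by
  rcases List.prefix_or_prefix_of_prefix (List.prefix_append l₁ l₂)
    (h ▸ List.prefix_append l₁' l₂') with hpre | hpre
  · exact eq_of_prefix_of_mem_firstPassage h₁ h₁' (Or.inl hb) hpre
  · exact (eq_of_prefix_of_mem_firstPassage h₁' h₁ (Or.inl hb') hpre).symm

theorem firstPassageSum_eq_tsum_mul (h0 : firstPassageSum ν x h B = 0) :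
    firstPassageSum ν x h ∅ =
      ∑' b : B, firstPassageSum ν x b (B \ {(b : G)}) * firstPassageSum ν b h ∅ := by
  simp only [firstPassageSum_diff_singleton]
  unfold firstPassageSum
  have hsplit : ∑' b : B, (∑' l : firstPassage x (b : G) B, (l.1.map ν).prod) *
        ∑' l : firstPassage (b : G) h ∅, (l.1.map ν).prod =
      ∑' z : Σ b : B, firstPassage x (b : G) B × firstPassage (b : G) h ∅,
        (z.2.1.1.map ν).prod * (z.2.2.1.map ν).prod := by
    rw [ENNReal.tsum_sigma']
    refine tsum_congr fun b => ?_
    rw [ENNReal.tsum_prod', ← ENNReal.tsum_mul_right]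
    simp only [ENNReal.tsum_mul_left]
  rw [hsplit]
  refine tsum_eq_tsum_of_ne_zero_bij (fun z => ⟨z.1.2.1.1 ++ z.1.2.2.1,
    append_mem_firstPassage_of_prod_map_ne_zero h0 z.1.2.1.2 z.1.2.2.2
      (left_ne_zero_of_mul z.2)⟩) ?_ ?_ ?_
  · rintro ⟨⟨⟨b, hb⟩, ⟨l₁, h₁⟩, ⟨l₂, _⟩⟩, _⟩ ⟨⟨⟨b', hb'⟩, ⟨l₁', h₁'⟩, ⟨l₂', _⟩⟩, _⟩ heq
    have happ : l₁ ++ l₂ = l₁' ++ l₂' := congrArg Subtype.val heq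
    obtain rfl := eq_of_append_eq_of_mem_firstPassage hb hb' h₁ h₁' happ
    obtain rfl : b = b' := h₁.1.symm.trans h₁'.1
    obtain rfl := List.append_cancel_left happ
    rfl
  · intro l hl
    obtain ⟨t, htB, htake⟩ := exists_firstPassage_split_of_prod_map_ne_zero h0 l.2 hl
    refine ⟨⟨⟨⟨_, htB⟩, ⟨_, htake⟩, ⟨_, drop_mem_firstPassage l.2 t⟩⟩, ?_⟩,
      Subtype.ext (List.take_append_drop t l.1)⟩
    rw [Function.mem_support, prod_map_take_mul_drop]
    exact hl
  · intro z
    simp only [List.map_append, List.prod_append]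

def increments {k : ℕ} (f : Fin (k + 1) → G) : List G :=
  List.ofFn fun i : Fin k => (f i.castSucc)⁻¹ * f i.succ

theorem length_increments {k : ℕ} (f : Fin (k + 1) → G) : (increments f).length = k :=
  List.length_ofFn

theorem mul_prod_take_increments {k : ℕ} (f : Fin (k + 1) → G) {j : ℕ} (hj : j < k + 1) :
    f 0 * ((increments f).take j).prod = f ⟨j, hj⟩ := by
  induction j with
  | zero => simp
  | succ j ih =>
    rw [List.prod_take_succ _ _ (by rw [length_increments]; omega), ← mul_assoc, ih (by omega)]
    simp [increments]

theorem increments_mul_prod_take (x : G) (l : List G) :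
    increments (fun j : Fin (l.length + 1) => x * (l.take j).prod) = l := by
  refine List.ext_getElem (length_increments _) fun i hi _ => ?_
  simp [increments, mul_assoc]

theorem increments_mem_firstPassage {k : ℕ} {f : Fin (k + 1) → G}
    (hf : f 0 = x ∧ f (Fin.last k) = y ∧ ∀ j : Fin k, f j.castSucc ∉ S ∪ {y}) :
    increments f ∈ firstPassage x y S := by
  obtain ⟨rfl, hlast, havoid⟩ := hf
  refine ⟨?_, fun j hj => ?_⟩
  · rw [← List.take_of_length_le (length_increments f).le,
      mul_prod_take_increments f k.lt_succ_self]
    exact hlast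
  · rw [length_increments] at hj
    rw [mul_prod_take_increments f (by omega)]
    exact havoid ⟨j, hj⟩

variable (x y S) in
def firstPassagePathEquiv (k : ℕ) :
    {f : Fin (k + 1) → G //
        f 0 = x ∧ f (Fin.last k) = y ∧ ∀ j : Fin k, f j.castSucc ∉ S ∪ {y}} ≃
      {l : firstPassage x y S // l.1.length = k} where
  toFun f := ⟨⟨increments f.1, increments_mem_firstPassage f.2⟩, length_increments f.1⟩
  invFun l := ⟨fun j => x * (l.1.1.take j).prod, by simp, by
    simpa [List.take_of_length_le l.2.le] using l.1.2.1, fun j => l.1.2.2 j (by simp [l.2])⟩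
  left_inv f := Subtype.ext <| funext fun j => by
    obtain ⟨f, rfl, -⟩ := f
    exact mul_prod_take_increments f j.isLt
  right_inv l := by
    obtain ⟨l, rfl⟩ := l
    exact Subtype.ext (Subtype.ext (increments_mul_prod_take x l.1))

theorem firstPassageSum_eq_tsum_length :
    firstPassageSum ν x y S =
      ∑' k, ∑' l : {l : firstPassage x y S // l.1.length = k}, (l.1.1.map ν).prod := by
  rw [firstPassageSum, ← (Equiv.sigmaFiberEquiv fun l : firstPassage x y S => l.1.length).tsum_eq,
    ENNReal.tsum_sigma']
  rfl

theorem firstPassageSum_ofReal_ne_top {μ : G → ℝ} (hμ : IsProb μ) :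
    firstPassageSum (fun g => ENNReal.ofReal (μ g)) x y S ≠ ⊤ :=
  ne_top_of_le_ne_top ENNReal.one_ne_top (firstPassageSum_le_one hμ.tsum_ofReal_eq_one)

theorem FP_eq_toReal_firstPassageSum {μ : G → ℝ} (hμ : IsProb μ) :
    FP μ x y S = (firstPassageSum (fun g => ENNReal.ofReal (μ g)) x y S).toReal := by
  have hfin := firstPassageSum_ofReal_ne_top (x := x) (y := y) (S := S) hμ
  rw [firstPassageSum_eq_tsum_length] at hfin ⊢
  have hk (k : ℕ) := ne_top_of_le_ne_top hfin (ENNReal.le_tsum k)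
  rw [ENNReal.tsum_toReal_eq hk, FP]
  refine tsum_congr fun k => ?_
  rw [ENNReal.tsum_toReal_eq fun l => ne_top_of_le_ne_top (hk k) (ENNReal.le_tsum l),
    ← (firstPassagePathEquiv x y S k).tsum_eq]
  refine tsum_congr fun f => ?_
  rw [toReal_prod_map_ofReal hμ.1]
  simp [firstPassagePathEquiv, increments, List.map_ofFn, List.prod_ofFn]

end FirstPassage

theorem stmt9_general {m : ℕ} (μ : FreeGroup (Fin m) → ℝ) (hμ : IsProb μ)
    (g : FreeGroup (Fin m)) (B : Set (FreeGroup (Fin m)))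
    (hB : IsStrongBarrier μ g B) (h : FreeGroup (Fin m)) (hh : h ∈ Cfin g)
    (x : FreeGroup (Fin m)) (hx : x ∉ Cfin g) :
    FP μ x h ∅ = ∑' b : B, FP μ x b (B \ {(b : FreeGroup (Fin m))}) * FP μ b h ∅ := by
  have h0 : firstPassageSum (fun a => ENNReal.ofReal (μ a)) x h B = 0 := by
    have hbarrier := hB.2 h hh x hx
    rw [FP_eq_toReal_firstPassageSum hμ] at hbarrier
    exact (ENNReal.toReal_eq_zero_iff _).mp hbarrier
      |>.resolve_right (firstPassageSum_ofReal_ne_top hμ)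
  simp only [FP_eq_toReal_firstPassageSum hμ, ← ENNReal.toReal_mul]
  rw [firstPassageSum_eq_tsum_mul h0, ENNReal.tsum_toReal_eq fun b =>
    ENNReal.mul_ne_top (firstPassageSum_ofReal_ne_top hμ) (firstPassageSum_ofReal_ne_top hμ)]

/-- Lemma 2: if `B` is a strong `g`-barrier then for every `h ∈ C_fin(g)`
and `x ∉ C_fin(g)`, `F_μ(x,h) = Σ_{b ∈ B} F_μ(x,b; B \ {b}) F_μ(b,h)`. -/
theorem stmt9 {m : ℕ} (μ : FreeGroup (Fin m) → ℝ) (hμ : IsProb μ)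
    (g : FreeGroup (Fin m)) (hg : g ≠ 1) (B : Set (FreeGroup (Fin m)))
    (hB : IsStrongBarrier μ g B) (h : FreeGroup (Fin m)) (hh : h ∈ Cfin g)
    (x : FreeGroup (Fin m)) (hx : x ∉ Cfin g) :
    FP μ x h ∅ = ∑' b : B, FP μ x b (B \ {(b : FreeGroup (Fin m))}) * FP μ b h ∅ :=
  stmt9_general μ hμ g B hB h hh x hx
end
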